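/- Every grid point of any hexagonal grid G_ε (as defined by the layer construction) has exactly 12 grid points at Euclidean distance exactly 2: six in its own layer, three in the layer above, and three in the layer below. Hence every hexagonal grid is 12-regular as a contact graph. -/

import Mathlib

/-- Cartesian coordinates of the grid point with hexagonal coordinates `(i,j,k)`,
given the horizontal-shift function `S`. -/
noncomputable def hexPoint (S : ℤ → ℤ) (i j k : ℤ) : EuclideanSpace ℝ (Fin 3) :=
  i • (!₂[2, 0, 0] : EuclideanSpace ℝ (Fin 3)) +
  j • (!₂[1, Real.sqrt 3, 0] : EuclideanSpace ℝ (Fin 3)) +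
  k • (!₂[0, 0, Real.sqrt (8/3)] : EuclideanSpace ℝ (Fin 3)) +
  S k • (!₂[1, Real.sqrt (1/3), 0] : EuclideanSpace ℝ (Fin 3))

/-- The `k`-th layer of the hexagonal grid determined by `S`. -/
def hexLayer (S : ℤ → ℤ) (k : ℤ) : Set (EuclideanSpace ℝ (Fin 3)) :=
  {q | ∃ i j : ℤ, q = hexPoint S i j k}

/-- The whole hexagonal grid determined by `S`. -/
def hexGrid (S : ℤ → ℤ) : Set (EuclideanSpace ℝ (Fin 3)) :=
  ⋃ k : ℤ, hexLayer S k

lemma hexPoint_apply0 (S : ℤ → ℤ) (i j k : ℤ) : (hexPoint S i j k) 0 = 2*i + j + S k := by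
  simp [hexPoint]; ring

lemma hexPoint_apply1 (S : ℤ → ℤ) (i j k : ℤ) :
    (hexPoint S i j k) 1 = j * Real.sqrt 3 + S k * Real.sqrt (1/3) := by
  simp [hexPoint]

lemma hexPoint_apply2 (S : ℤ → ℤ) (i j k : ℤ) : (hexPoint S i j k) 2 = k * Real.sqrt (8/3) := by
  simp [hexPoint]

lemma hex_dist_sq (S : ℤ → ℤ) (i j k i' j' k' : ℤ) :
    dist (hexPoint S i j k) (hexPoint S i' j' k') ^ 2 * 3 =
      ((3*(2*(i'-i)+(j'-j)+(S k' - S k))^2 + (3*(j'-j)+(S k' - S k))^2 + 8*(k'-k)^2 : ℤ) : ℝ) := by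
  have h3 : Real.sqrt 3 * Real.sqrt 3 = 3 := Real.mul_self_sqrt (by norm_num)
  have h13 : Real.sqrt (1/3) * Real.sqrt (1/3) = 1/3 := Real.mul_self_sqrt (by norm_num)
  have h313 : Real.sqrt 3 * Real.sqrt (1/3) = 1 := by
    rw [← Real.sqrt_mul (by norm_num)]; norm_num
  have h83 : Real.sqrt (8/3) * Real.sqrt (8/3) = 8/3 := Real.mul_self_sqrt (by norm_num)
  rw [EuclideanSpace.dist_eq, Real.sq_sqrt (by positivity)]
  rw [Fin.sum_univ_three]
  simp only [Real.dist_eq, sq_abs]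
  rw [hexPoint_apply0, hexPoint_apply0, hexPoint_apply1, hexPoint_apply1,
    hexPoint_apply2, hexPoint_apply2]
  push_cast
  linear_combination (3*((j:ℝ)-j')^2) * h3 + (6*((j:ℝ)-j')*((S k:ℝ)-S k')) * h313 +
    (3*((S k:ℝ)-(S k'))^2) * h13 + (3*((k:ℝ)-k')^2) * h83

lemma hex_dist_eq_two_iff (S : ℤ → ℤ) (i j k i' j' k' : ℤ) :
    dist (hexPoint S i j k) (hexPoint S i' j' k') = 2 ↔
      3*(2*(i'-i)+(j'-j)+(S k' - S k))^2 + (3*(j'-j)+(S k' - S k))^2 + 8*(k'-k)^2 = 12 := by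
  have h := hex_dist_sq S i j k i' j' k'
  constructor
  · intro hd
    rw [hd] at h
    norm_num at h
    exact_mod_cast h.symm
  · intro he
    have h4 : dist (hexPoint S i j k) (hexPoint S i' j' k') ^ 2 = 2 ^ 2 := by
      rw [he] at h; push_cast at h; nlinarith
    have h0 : (0:ℝ) ≤ dist (hexPoint S i j k) (hexPoint S i' j' k') := dist_nonneg
    nlinarith

lemma hexPoint_injective (S : ℤ → ℤ) {i j k i' j' k' : ℤ}
    (h : hexPoint S i j k = hexPoint S i' j' k') : i = i' ∧ j = j' ∧ k = k' := by
  have hd : dist (hexPoint S i j k) (hexPoint S i' j' k') = 0 := by rw [h, dist_self]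
  have h2 := hex_dist_sq S i j k i' j' k'
  rw [hd] at h2
  norm_num at h2
  have h3 : 3*(2*(i'-i)+(j'-j)+(S k' - S k))^2 + (3*(j'-j)+(S k' - S k))^2 + 8*(k'-k)^2 = 0 := by
    exact_mod_cast h2.symm
  have hk : k = k' := by
    nlinarith [sq_nonneg (2*(i'-i)+(j'-j)+(S k' - S k)), sq_nonneg (3*(j'-j)+(S k' - S k)),
      sq_nonneg (k'-k)]
  subst hk
  simp at h3
  have hj : j = j' := by nlinarith [sq_nonneg (2*(i'-i)+(j'-j)), sq_nonneg (3*(j'-j))]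
  subst hj
  have hi : i = i' := by nlinarith [sq_nonneg (2*(i'-i))]
  exact ⟨hi, rfl, rfl⟩

lemma hexF_injective (S : ℤ → ℤ) (k : ℤ) :
    Function.Injective (fun p : ℤ × ℤ => hexPoint S p.1 p.2 k) := by
  intro p q h
  have := hexPoint_injective S h
  exact Prod.ext this.1 this.2.1

lemma solve_same (a b : ℤ) (h : 3*(2*a+b)^2 + (3*b)^2 = 12) :
    (a,b) = (1,0) ∨ (a,b) = (-1,0) ∨ (a,b) = (0,1) ∨ (a,b) = (0,-1) ∨
    (a,b) = (1,-1) ∨ (a,b) = (-1,1) := by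
  have hb : b^2 ≤ 1 := by nlinarith [sq_nonneg (2*a+b)]
  have ha : a^2 ≤ 2 := by nlinarith [sq_nonneg b]
  have hb' : -1 ≤ b ∧ b ≤ 1 := by constructor <;> nlinarith
  have ha' : -1 ≤ a ∧ a ≤ 1 := by constructor <;> nlinarith
  obtain ⟨hb1, hb2⟩ := hb'
  obtain ⟨ha1, ha2⟩ := ha'
  interval_cases a <;> interval_cases b <;> simp_all

lemma solve_adj (d a b : ℤ) (hd : d = 1 ∨ d = -1)
    (h : 3*(2*a+b+d)^2 + (3*b+d)^2 + 8 = 12) :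
    (a,b) = (0,0) ∨ (a,b) = (-d,0) ∨ (a,b) = (0,-d) := by
  rcases hd with h1|h1 <;> subst h1 <;>
  · have hb' : -1 ≤ b ∧ b ≤ 1 := by
      constructor <;> nlinarith [sq_nonneg (2*a+b+1), sq_nonneg (2*a+b-1)]
    have ha' : -1 ≤ a ∧ a ≤ 1 := by
      constructor <;> nlinarith [sq_nonneg (3*b+1), sq_nonneg (3*b-1)]
    obtain ⟨hb1, hb2⟩ := hb'
    obtain ⟨ha1, ha2⟩ := ha'
    interval_cases a <;> interval_cases b <;> simp_all

lemma step_lemma (ε S : ℤ → ℤ)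
    (hε : ∀ k : ℤ, k ≠ 0 → ε k = 1 ∨ ε k = -1)
    (hS0 : S 0 = 0)
    (hSpos : ∀ k : ℤ, 0 < k → S k = ∑ t ∈ Finset.Icc 1 k, ε t)
    (hSneg : ∀ k : ℤ, k < 0 → S k = ∑ t ∈ Finset.Icc k (-1), ε t) :
    ∀ k : ℤ, S (k+1) - S k = 1 ∨ S (k+1) - S k = -1 := by
  intro k
  rcases le_or_gt 0 k with hk | hk
  · have e0 : S k = ∑ t ∈ Finset.Icc 1 k, ε t := by
      rcases eq_or_lt_of_le hk with h | h
      · rw [← h, hS0]; simp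
      · exact hSpos k h
    have e1 : S (k+1) = ∑ t ∈ Finset.Icc 1 (k+1), ε t := hSpos _ (by omega)
    have hins : Finset.Icc (1:ℤ) (k+1) = insert (k+1) (Finset.Icc 1 k) := by
      ext x; simp only [Finset.mem_Icc, Finset.mem_insert]; omega
    have hnm : k + 1 ∉ Finset.Icc (1:ℤ) k := by simp [Finset.mem_Icc]
    have hsum : ∑ t ∈ Finset.Icc (1:ℤ) (k+1), ε t = ε (k+1) + ∑ t ∈ Finset.Icc (1:ℤ) k, ε t := by
      rw [hins, Finset.sum_insert hnm]
    have := hε (k+1) (by omega)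
    omega
  · have e0 : S k = ∑ t ∈ Finset.Icc k (-1), ε t := hSneg k hk
    have e1 : S (k+1) = ∑ t ∈ Finset.Icc (k+1) (-1), ε t := by
      rcases eq_or_lt_of_le (by omega : k + 1 ≤ 0) with h | h
      · have hk1 : k = -1 := by omega
        subst hk1; norm_num [hS0]
      · exact hSneg _ h
    have hins : Finset.Icc k (-1) = insert k (Finset.Icc (k+1) (-1)) := by
      ext x; simp only [Finset.mem_Icc, Finset.mem_insert]; omega
    have hnm : k ∉ Finset.Icc (k+1) (-1) := by simp [Finset.mem_Icc]
    have hsum : ∑ t ∈ Finset.Icc k (-1), ε t = ε k + ∑ t ∈ Finset.Icc (k+1) (-1), ε t := by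
      rw [hins, Finset.sum_insert hnm]
    have := hε k (by omega)
    omega

theorem hexGrid_twelve_regular (ε S : ℤ → ℤ)
    (hε0 : ε 0 = 0) (hε : ∀ k : ℤ, k ≠ 0 → ε k = 1 ∨ ε k = -1)
    (hS0 : S 0 = 0)
    (hSpos : ∀ k : ℤ, 0 < k → S k = ∑ t ∈ Finset.Icc 1 k, ε t)
    (hSneg : ∀ k : ℤ, k < 0 → S k = ∑ t ∈ Finset.Icc k (-1), ε t)
    (i j k : ℤ) :
    {q | q ∈ hexLayer S k ∧ dist (hexPoint S i j k) q = 2}.ncard = 6 ∧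
    {q | q ∈ hexLayer S (k + 1) ∧ dist (hexPoint S i j k) q = 2}.ncard = 3 ∧
    {q | q ∈ hexLayer S (k - 1) ∧ dist (hexPoint S i j k) q = 2}.ncard = 3 ∧
    {q | q ∈ hexGrid S ∧ dist (hexPoint S i j k) q = 2}.ncard = 12 := by
  have hstep := step_lemma ε S hε hS0 hSpos hSneg
  have hdp : S (k+1) - S k = 1 ∨ S (k+1) - S k = -1 := hstep k
  have hdm : S (k-1) - S k = 1 ∨ S (k-1) - S k = -1 := by
    have := hstep (k-1)
    rw [sub_add_cancel] at this
    omega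
  -- set equalities
  have hA : {q | q ∈ hexLayer S k ∧ dist (hexPoint S i j k) q = 2} =
      (fun p : ℤ × ℤ => hexPoint S p.1 p.2 k) ''
        ↑({(i+1,j),(i-1,j),(i,j+1),(i,j-1),(i+1,j-1),(i-1,j+1)} : Finset (ℤ×ℤ)) := by
    ext q
    simp only [Set.mem_setOf_eq, Set.mem_image, hexLayer]
    constructor
    · rintro ⟨⟨i', j', rfl⟩, hd⟩
      rw [hex_dist_eq_two_iff] at hd
      simp only [sub_self, add_zero, ne_eq, OfNat.ofNat_ne_zero, not_false_eq_true, zero_pow,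
        mul_zero] at hd
      have hsol := solve_same (i'-i) (j'-j) (by linarith)
      refine ⟨(i',j'), ?_, rfl⟩
      simp only [Finset.coe_insert, Set.mem_insert_iff, Finset.coe_singleton,
        Set.mem_singleton_iff, Prod.mk.injEq, Prod.ext_iff] at hsol ⊢
      omega
    · rintro ⟨p, hp, rfl⟩
      refine ⟨⟨p.1, p.2, rfl⟩, ?_⟩
      rw [hex_dist_eq_two_iff]
      simp only [Finset.coe_insert, Set.mem_insert_iff, Finset.coe_singleton,
        Set.mem_singleton_iff, Prod.ext_iff] at hp
      rcases hp with ⟨h1,h2⟩|⟨h1,h2⟩|⟨h1,h2⟩|⟨h1,h2⟩|⟨h1,h2⟩|⟨h1,h2⟩ <;>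
        rw [h1, h2] <;> ring
  have hB : {q | q ∈ hexLayer S (k+1) ∧ dist (hexPoint S i j k) q = 2} =
      (fun p : ℤ × ℤ => hexPoint S p.1 p.2 (k+1)) ''
        ↑({(i,j),(i-(S (k+1)-S k),j),(i,j-(S (k+1)-S k))} : Finset (ℤ×ℤ)) := by
    ext q
    simp only [Set.mem_setOf_eq, Set.mem_image, hexLayer]
    constructor
    · rintro ⟨⟨i', j', rfl⟩, hd⟩
      rw [hex_dist_eq_two_iff] at hd
      have hd' : 3*(2*(i'-i)+(j'-j)+(S (k+1) - S k))^2 + (3*(j'-j)+(S (k+1) - S k))^2 + 8 = 12 := by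
        linear_combination hd
      have hsol := solve_adj (S (k+1) - S k) (i'-i) (j'-j) hdp hd'
      refine ⟨(i',j'), ?_, rfl⟩
      simp only [Finset.coe_insert, Set.mem_insert_iff, Finset.coe_singleton,
        Set.mem_singleton_iff, Prod.mk.injEq, Prod.ext_iff] at hsol ⊢
      omega
    · rintro ⟨p, hp, rfl⟩
      refine ⟨⟨p.1, p.2, rfl⟩, ?_⟩
      rw [hex_dist_eq_two_iff]
      have h2 : (S (k+1) - S k)^2 = 1 := by rcases hdp with h|h <;> rw [h] <;> norm_num
      simp only [Finset.coe_insert, Set.mem_insert_iff, Finset.coe_singleton,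
        Set.mem_singleton_iff, Prod.ext_iff] at hp
      rcases hp with ⟨h1,h2'⟩|⟨h1,h2'⟩|⟨h1,h2'⟩ <;> rw [h1, h2'] <;> linear_combination (4:ℤ) * h2
  have hC : {q | q ∈ hexLayer S (k-1) ∧ dist (hexPoint S i j k) q = 2} =
      (fun p : ℤ × ℤ => hexPoint S p.1 p.2 (k-1)) ''
        ↑({(i,j),(i-(S (k-1)-S k),j),(i,j-(S (k-1)-S k))} : Finset (ℤ×ℤ)) := by
    ext q
    simp only [Set.mem_setOf_eq, Set.mem_image, hexLayer]
    constructor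
    · rintro ⟨⟨i', j', rfl⟩, hd⟩
      rw [hex_dist_eq_two_iff] at hd
      have hd' : 3*(2*(i'-i)+(j'-j)+(S (k-1) - S k))^2 + (3*(j'-j)+(S (k-1) - S k))^2 + 8 = 12 := by
        linear_combination hd
      have hsol := solve_adj (S (k-1) - S k) (i'-i) (j'-j) hdm hd'
      refine ⟨(i',j'), ?_, rfl⟩
      simp only [Finset.coe_insert, Set.mem_insert_iff, Finset.coe_singleton,
        Set.mem_singleton_iff, Prod.mk.injEq, Prod.ext_iff] at hsol ⊢
      omega
    · rintro ⟨p, hp, rfl⟩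
      refine ⟨⟨p.1, p.2, rfl⟩, ?_⟩
      rw [hex_dist_eq_two_iff]
      have h2 : (S (k-1) - S k)^2 = 1 := by rcases hdm with h|h <;> rw [h] <;> norm_num
      simp only [Finset.coe_insert, Set.mem_insert_iff, Finset.coe_singleton,
        Set.mem_singleton_iff, Prod.ext_iff] at hp
      rcases hp with ⟨h1,h2'⟩|⟨h1,h2'⟩|⟨h1,h2'⟩ <;> rw [h1, h2'] <;> linear_combination (4:ℤ) * h2
  -- cardinalities
  have cardA : {q | q ∈ hexLayer S k ∧ dist (hexPoint S i j k) q = 2}.ncard = 6 := by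
    rw [hA, Set.ncard_image_of_injective _ (hexF_injective S k), Set.ncard_coe_finset]
    rw [Finset.card_insert_of_notMem (by simp [Prod.ext_iff]; omega),
        Finset.card_insert_of_notMem (by simp [Prod.ext_iff]; omega),
        Finset.card_insert_of_notMem (by simp [Prod.ext_iff]; omega),
        Finset.card_insert_of_notMem (by simp [Prod.ext_iff]; omega),
        Finset.card_insert_of_notMem (by simp [Prod.ext_iff]; omega),
        Finset.card_singleton]
  have cardB : {q | q ∈ hexLayer S (k+1) ∧ dist (hexPoint S i j k) q = 2}.ncard = 3 := by
    rw [hB, Set.ncard_image_of_injective _ (hexF_injective S (k+1)), Set.ncard_coe_finset]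
    rw [Finset.card_insert_of_notMem (by simp [Prod.ext_iff]; omega),
        Finset.card_insert_of_notMem (by simp [Prod.ext_iff]; omega),
        Finset.card_singleton]
  have cardC : {q | q ∈ hexLayer S (k-1) ∧ dist (hexPoint S i j k) q = 2}.ncard = 3 := by
    rw [hC, Set.ncard_image_of_injective _ (hexF_injective S (k-1)), Set.ncard_coe_finset]
    rw [Finset.card_insert_of_notMem (by simp [Prod.ext_iff]; omega),
        Finset.card_insert_of_notMem (by simp [Prod.ext_iff]; omega),
        Finset.card_singleton]
  refine ⟨cardA, cardB, cardC, ?_⟩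
  -- the grid set decomposes
  have hG : {q | q ∈ hexGrid S ∧ dist (hexPoint S i j k) q = 2} =
      {q | q ∈ hexLayer S k ∧ dist (hexPoint S i j k) q = 2} ∪
      ({q | q ∈ hexLayer S (k+1) ∧ dist (hexPoint S i j k) q = 2} ∪
       {q | q ∈ hexLayer S (k-1) ∧ dist (hexPoint S i j k) q = 2}) := by
    ext q
    simp only [Set.mem_setOf_eq, Set.mem_union, hexGrid, Set.mem_iUnion]
    constructor
    · rintro ⟨⟨k'', hq⟩, hd⟩
      obtain ⟨i', j', rfl⟩ := hq
      have hd' := (hex_dist_eq_two_iff S i j k i' j' k'').mp hd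
      have hkk : (k''-k)^2 ≤ 1 := by
        nlinarith [sq_nonneg (2*(i'-i)+(j'-j)+(S k'' - S k)), sq_nonneg (3*(j'-j)+(S k'' - S k))]
      have hkk' : k'' = k ∨ k'' = k+1 ∨ k'' = k-1 := by
        have h1 : -1 ≤ k''-k ∧ k''-k ≤ 1 := by constructor <;> nlinarith
        omega
      rcases hkk' with rfl|rfl|rfl
      · exact Or.inl ⟨⟨i', j', rfl⟩, hd⟩
      · exact Or.inr (Or.inl ⟨⟨i', j', rfl⟩, hd⟩)
      · exact Or.inr (Or.inr ⟨⟨i', j', rfl⟩, hd⟩)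
    · rintro (⟨hq, hd⟩|⟨hq, hd⟩|⟨hq, hd⟩)
      exacts [⟨⟨k, hq⟩, hd⟩, ⟨⟨k+1, hq⟩, hd⟩, ⟨⟨k-1, hq⟩, hd⟩]
  -- finiteness
  have finA : {q | q ∈ hexLayer S k ∧ dist (hexPoint S i j k) q = 2}.Finite := by
    rw [hA]; exact (Set.toFinite _).image _
  have finB : {q | q ∈ hexLayer S (k+1) ∧ dist (hexPoint S i j k) q = 2}.Finite := by
    rw [hB]; exact (Set.toFinite _).image _
  have finC : {q | q ∈ hexLayer S (k-1) ∧ dist (hexPoint S i j k) q = 2}.Finite := by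
    rw [hC]; exact (Set.toFinite _).image _
  -- disjointness
  have hlayer_ne : ∀ k1 k2 : ℤ, k1 ≠ k2 → ∀ q, q ∈ hexLayer S k1 → q ∈ hexLayer S k2 → False := by
    rintro k1 k2 hne q ⟨i1, j1, rfl⟩ ⟨i2, j2, heq⟩
    exact hne (hexPoint_injective S heq).2.2
  have dBC : Disjoint {q | q ∈ hexLayer S (k+1) ∧ dist (hexPoint S i j k) q = 2}
      {q | q ∈ hexLayer S (k-1) ∧ dist (hexPoint S i j k) q = 2} := by
    rw [Set.disjoint_left]
    rintro q ⟨hq1, -⟩ ⟨hq2, -⟩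
    exact hlayer_ne (k+1) (k-1) (by omega) q hq1 hq2
  have dABC : Disjoint {q | q ∈ hexLayer S k ∧ dist (hexPoint S i j k) q = 2}
      ({q | q ∈ hexLayer S (k+1) ∧ dist (hexPoint S i j k) q = 2} ∪
       {q | q ∈ hexLayer S (k-1) ∧ dist (hexPoint S i j k) q = 2}) := by
    rw [Set.disjoint_left]
    rintro q ⟨hq1, -⟩ (⟨hq2, -⟩|⟨hq2, -⟩)
    · exact hlayer_ne k (k+1) (by omega) q hq1 hq2
    · exact hlayer_ne k (k-1) (by omega) q hq1 hq2
  rw [hG, Set.ncard_union_eq dABC finA (Set.Finite.union finB finC),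
    Set.ncard_union_eq dBC finB finC, cardA, cardB, cardC]
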